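/- Let 𝒯ᵢ be the automorphism of the pair (Fₙ, Mₙ) with first component xᵢ ↦ xᵢ⁻¹ (fixing other xⱼ) and second component fixing each Kⱼ (extended semilinearly, so 𝒯ᵢ²(g ▷ m) = 𝒯ᵢ¹(g) ▷ m for generators m). Then for 1 ≤ i ≤ n−1: 𝒯ᵢ ∘ 𝒮ᵢ = 𝒮ᵢ ∘ 𝒯_{i+1} as automorphisms of the pair, and in particular the second components agree on all of Mₙ. -/

import Mathlib

/-! Both second components are semilinear maps of the form `lift2 f t`, and these compose as
`lift2 f t ∘ lift2 g u = lift2 (f ∘ g) (lift2 f t ∘ u)`. Once the first components agree (a check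
on the generators `xⱼ`), it remains to compare images of the `Kⱼ`: the right side sends `Kⱼ` to
`𝒮ᵢ²(Kⱼ)`, and `𝒯ᵢ²` fixes `𝒮ᵢ²(Kⱼ)` because it is built from the `K`'s and `x_{i+1}`, all of which
`𝒯ᵢ` fixes. -/

/-- The free group `Fₙ` on generators `x₀, …, x_{n-1}` (0-based indexing). -/
abbrev FG (n : ℕ) := FreeGroup (Fin n)
/-- The group ring `ℤ[Fₙ]`. -/
abbrev GR (n : ℕ) := MonoidAlgebra ℤ (FG n)
/-- The free `ℤ[Fₙ]`-module `Mₙ` on `K₀, …, K_{n-1}`. -/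
abbrev M (n : ℕ) := Fin n →₀ GR n

/-- The generator `xᵢ`. -/
def X {n : ℕ} (i : Fin n) : FG n := FreeGroup.of i
/-- The module generator `Kᵢ`. -/
noncomputable def K {n : ℕ} (i : Fin n) : M n := Finsupp.single i 1

/-- The action `g ▷ m` of `Fₙ` on `Mₙ`, via the `ℤ[Fₙ]`-module structure. -/
noncomputable def act {n : ℕ} (g : FG n) (m : M n) : M n :=
  (MonoidAlgebra.of ℤ (FG n) g) • m

def fin0 (n i : ℕ) (h : i + 1 < n) : Fin n := ⟨i, Nat.lt_of_succ_lt h⟩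
def fin1 (n i : ℕ) (h : i + 1 < n) : Fin n := ⟨i + 1, h⟩

/-- The additive endomorphism of `Mₙ`, semilinear over the group endomorphism `f1`
(i.e. `m ↦ g ▷ m` goes to `m ↦ f1 g ▷ m`), determined by the images `t i` of the
generators `K i`. -/
noncomputable def lift2 {n : ℕ} (f1 : FG n →* FG n) (t : Fin n → M n) : M n →+ M n :=
  Finsupp.liftAddHom fun i =>
    { toFun := fun r => (MonoidAlgebra.mapDomainRingHom ℤ f1 r) • t i
      map_zero' := by simp
      map_add' := by intro a b; rw [map_add, add_smul] }

/-- First component of the lifted Artin automorphism `𝒮ᵢ`. -/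
def S1 (n i : ℕ) (h : i + 1 < n) : FG n →* FG n :=
  FreeGroup.lift fun j =>
    if (j : ℕ) = i then X (fin1 n i h)
    else if (j : ℕ) = i + 1 then (X (fin1 n i h))⁻¹ * X (fin0 n i h) * X (fin1 n i h)
    else X j

/-- Second component of the lifted Artin automorphism `𝒮ᵢ`:
`Kᵢ ↦ Kᵢ + K_{i+1} − x_{i+1}⁻¹ ▷ Kᵢ`, `K_{i+1} ↦ x_{i+1}⁻¹ ▷ Kᵢ`, fixing other `Kⱼ`,
extended semilinearly over `𝒮ᵢ¹`. -/
noncomputable def S2 (n i : ℕ) (h : i + 1 < n) : M n →+ M n :=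
  lift2 (S1 n i h) fun j =>
    if (j : ℕ) = i then
      K (fin0 n i h) + K (fin1 n i h) - act (X (fin1 n i h))⁻¹ (K (fin0 n i h))
    else if (j : ℕ) = i + 1 then act (X (fin1 n i h))⁻¹ (K (fin0 n i h))
    else K j

/-- First component of the inverse `𝒮̄ᵢ`: `xᵢ ↦ xᵢ x_{i+1} xᵢ⁻¹`, `x_{i+1} ↦ xᵢ`. -/
def Sbar1 (n i : ℕ) (h : i + 1 < n) : FG n →* FG n :=
  FreeGroup.lift fun j =>
    if (j : ℕ) = i then X (fin0 n i h) * X (fin1 n i h) * (X (fin0 n i h))⁻¹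
    else if (j : ℕ) = i + 1 then X (fin0 n i h)
    else X j

/-- Second component of the inverse `𝒮̄ᵢ`: `Kᵢ ↦ xᵢ ▷ K_{i+1}`,
`K_{i+1} ↦ Kᵢ + K_{i+1} − xᵢ ▷ K_{i+1}`, fixing other `Kⱼ`. -/
noncomputable def Sbar2 (n i : ℕ) (h : i + 1 < n) : M n →+ M n :=
  lift2 (Sbar1 n i h) fun j =>
    if (j : ℕ) = i then act (X (fin0 n i h)) (K (fin1 n i h))
    else if (j : ℕ) = i + 1 then
      K (fin0 n i h) + K (fin1 n i h) - act (X (fin0 n i h)) (K (fin1 n i h))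
    else K j

/-- First component of the transposition automorphism `ℛᵢ`. -/
def R1 (n i : ℕ) (h : i + 1 < n) : FG n →* FG n :=
  FreeGroup.lift fun j =>
    if (j : ℕ) = i then X (fin1 n i h)
    else if (j : ℕ) = i + 1 then X (fin0 n i h)
    else X j

/-- Second component of `ℛᵢ`: swaps `Kᵢ` and `K_{i+1}`, fixing other `Kⱼ`. -/
noncomputable def R2 (n i : ℕ) (h : i + 1 < n) : M n →+ M n :=
  lift2 (R1 n i h) fun j =>
    if (j : ℕ) = i then K (fin1 n i h)
    else if (j : ℕ) = i + 1 then K (fin0 n i h)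
    else K j

/-- First component of the inversion automorphism `𝒯ᵢ`: `xᵢ ↦ xᵢ⁻¹`. -/
def T1 (n i : ℕ) (h : i < n) : FG n →* FG n :=
  FreeGroup.lift fun j => if (j : ℕ) = i then (X (⟨i, h⟩ : Fin n))⁻¹ else X j

/-- Second component of `𝒯ᵢ`: fixes each `Kⱼ`, extended semilinearly over `𝒯ᵢ¹`. -/
noncomputable def T2 (n i : ℕ) (h : i < n) : M n →+ M n :=
  lift2 (T1 n i h) fun j => K j

section Lift2

variable {n : ℕ}

lemma lift2_single (f : FG n →* FG n) (t : Fin n → M n) (j : Fin n) (r : GR n) :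
    lift2 f t (Finsupp.single j r) = MonoidAlgebra.mapDomainRingHom ℤ f r • t j := by
  simp [lift2]

lemma lift2_K (f : FG n →* FG n) (t : Fin n → M n) (j : Fin n) : lift2 f t (K j) = t j := by
  simp [K, lift2_single]

lemma lift2_smul (f : FG n →* FG n) (t : Fin n → M n) (r : GR n) (m : M n) :
    lift2 f t (r • m) = MonoidAlgebra.mapDomainRingHom ℤ f r • lift2 f t m := by
  induction m using Finsupp.induction with
  | zero => simp
  | single_add j s m _ _ ih =>
    rw [smul_add, map_add, map_add, ih, Finsupp.smul_single, lift2_single, lift2_single,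
      smul_add, smul_eq_mul, map_mul, mul_smul]

lemma lift2_act (f : FG n →* FG n) (t : Fin n → M n) (g : FG n) (m : M n) :
    lift2 f t (act g m) = act (f g) (lift2 f t m) := by
  simp [act, lift2_smul, MonoidAlgebra.of_apply, MonoidAlgebra.mapDomainRingHom_apply]

lemma lift2_comp_lift2 (f g : FG n →* FG n) (t u : Fin n → M n) :
    (lift2 f t).comp (lift2 g u) = lift2 (f.comp g) fun j => lift2 f t (u j) := by
  refine Finsupp.addHom_ext fun j r => ?_
  rw [AddMonoidHom.comp_apply, lift2_single, lift2_single, lift2_smul,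
    MonoidAlgebra.mapDomainRingHom_comp, RingHom.comp_apply]

end Lift2

lemma T1_comp_S1 (n i : ℕ) (h : i + 1 < n) :
    (T1 n i (Nat.lt_of_succ_lt h)).comp (S1 n i h) = (S1 n i h).comp (T1 n (i + 1) h) := by
  refine FreeGroup.ext_hom _ _ fun a => ?_
  by_cases h1 : (a : ℕ) = i
  · simp [S1, T1, X, fin0, fin1, h1]
  by_cases h2 : (a : ℕ) = i + 1
  · simp [S1, T1, X, fin0, fin1, h2, mul_assoc]
  · simp [S1, T1, X, fin0, fin1, h1, h2]

lemma T2_K (n i : ℕ) (h : i < n) (j : Fin n) : T2 n i h (K j) = K j :=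
  lift2_K _ _ j

lemma T2_act_inv_X_succ (n i : ℕ) (h : i + 1 < n) (m : M n) :
    T2 n i (Nat.lt_of_succ_lt h) (act (X (fin1 n i h))⁻¹ m) =
      act (X (fin1 n i h))⁻¹ (T2 n i (Nat.lt_of_succ_lt h) m) := by
  rw [T2, lift2_act]
  simp [T1, X, fin1]

/-- relation `𝒯ᵢ ∘ 𝒮ᵢ = 𝒮ᵢ ∘ 𝒯_{i+1}` for automorphisms of the pair
`(Fₙ, Mₙ)`; in particular the second components agree on all of `Mₙ`. -/
theorem liftedArtin_TS_comm (n i : ℕ) (h : i + 1 < n) :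
    (T1 n i (Nat.lt_of_succ_lt h)).comp (S1 n i h) =
      (S1 n i h).comp (T1 n (i + 1) h) ∧
    (T2 n i (Nat.lt_of_succ_lt h)).comp (S2 n i h) =
      (S2 n i h).comp (T2 n (i + 1) h) := by
  refine ⟨T1_comp_S1 n i h, ?_⟩
  rw [S2, T2, T2, lift2_comp_lift2, lift2_comp_lift2, T1_comp_S1]
  congr 1
  funext j
  rw [lift2_K, ← T2]
  split_ifs
  · rw [map_sub, map_add, T2_act_inv_X_succ, T2_K, T2_K]
  · rw [T2_act_inv_X_succ, T2_K]
  · exact T2_K n i _ j
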